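/- Let A be a clone over ℕ and n ≥ 1. Define the n-th matrix power A^[n] as follows: its underlying set is A^n (functions {1,…,n} → A); for v : ℕ → A^n let ⟨v⟩ : ℕ → A be the concatenation ⟨v⟩((k−1)·n + r) = v(k)(r) for k ≥ 1 and 1 ≤ r ≤ n; the substitution is u⟦v⟧(i) := u(i)[⟨v⟩] for u ∈ A^n, v : ℕ → A^n, 1 ≤ i ≤ n; the k-th distinguished element is X_k ∈ A^n with X_k(i) = x_{(k−1)·n + i}. Then A^[n] is a clone over ℕ: (u⟦v⟧)⟦w⟧ = u⟦fun k => (v k)⟦w⟧⟧, u⟦X⟧ = u where X(k) = X_k, and X_k⟦v⟧ = v k. -/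

import Mathlib

/-- A clone over the positive integers ℕ = {1,2,3,…}. -/
structure CloneN (A : Type*) where
  sub : A → (ℕ+ → A) → A
  x : ℕ+ → A
  sub_assoc : ∀ (a : A) (f g : ℕ+ → A), sub (sub a f) g = sub a (fun i => sub (f i) g)
  sub_x : ∀ a : A, sub a x = a
  x_sub : ∀ (i : ℕ+) (f : ℕ+ → A), sub (x i) f = f i

/-- The concatenation `⟨v⟩ : ℕ → A` of a sequence `v : ℕ → A^n`:
`⟨v⟩((k−1)·n + r) = v(k)(r)` for `k ≥ 1`, `1 ≤ r ≤ n`. Here `A^n` is modelled as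
`Fin n → A`, with `Fin`-index `r` representing position `r+1`. -/
def matConc {A : Type*} (n : ℕ) (hn : 0 < n) (v : ℕ+ → (Fin n → A)) : ℕ+ → A :=
  fun m =>
    v ⟨((m : ℕ) - 1) / n + 1, Nat.succ_pos _⟩
      ⟨((m : ℕ) - 1) % n, Nat.mod_lt _ hn⟩

/-- Substitution in the `n`-th matrix power: `u⟦v⟧(i) = u(i)[⟨v⟩]`. -/
def matSub {A : Type*} (C : CloneN A) (n : ℕ) (hn : 0 < n)
    (u : Fin n → A) (v : ℕ+ → (Fin n → A)) : Fin n → A :=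
  fun i => C.sub (u i) (matConc n hn v)

/-- The `k`-th distinguished element of the matrix power: `X_k(i) = x_{(k−1)·n + i}`
for `1 ≤ i ≤ n`. -/
def matX {A : Type*} (C : CloneN A) (n : ℕ) (k : ℕ+) : Fin n → A :=
  fun i => C.x ⟨((k : ℕ) - 1) * n + (i : ℕ) + 1, Nat.succ_pos _⟩

/-! The index map `(k, r) ↦ (k - 1) * n + r + 1` is a bijection `ℕ+ × Fin n ≃ ℕ+`, so
concatenation identifies sequences in `A^n` with sequences in `A`. Under this identification
`⟨X⟩ = x` and `⟨fun k => v k⟦w⟧⟩ = fun m => ⟨v⟩ m [⟨w⟩]`, and the three clone laws of `A^[n]`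
become those of `A`, applied componentwise. -/

section MatrixPower

variable {A : Type*} {n : ℕ}

theorem matConc_apply_index (hn : 0 < n) (v : ℕ+ → Fin n → A) (k : ℕ+) (i : Fin n) :
    matConc n hn v ⟨((k : ℕ) - 1) * n + i + 1, Nat.succ_pos _⟩ = v k i := by
  have hdiv : (((k : ℕ) - 1) * n + i) / n = (k : ℕ) - 1 := by
    rw [Nat.mul_comm, Nat.mul_add_div hn, Nat.div_eq_of_lt i.isLt, Nat.add_zero]
  have hmod : (((k : ℕ) - 1) * n + i) % n = i := by
    rw [Nat.mul_comm, Nat.mul_add_mod, Nat.mod_eq_of_lt i.isLt]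
  simp only [matConc, PNat.mk_coe, Nat.add_sub_cancel, hdiv, hmod, Nat.sub_add_cancel k.pos]
  rfl

theorem matConc_matX (C : CloneN A) (hn : 0 < n) : matConc n hn (matX C n) = C.x := by
  funext m
  simp only [matConc, matX]
  congr
  change (((m : ℕ) - 1) / n + 1 - 1) * n + ((m : ℕ) - 1) % n + 1 = m
  rw [Nat.add_sub_cancel, Nat.div_add_mod', Nat.sub_add_cancel m.pos]

theorem matConc_matSub (C : CloneN A) (hn : 0 < n) (v w : ℕ+ → Fin n → A) :
    matConc n hn (fun k => matSub C n hn (v k) w) =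
      fun m => C.sub (matConc n hn v m) (matConc n hn w) :=
  rfl

end MatrixPower

theorem matrix_power_is_clone {A : Type*} (C : CloneN A) (n : ℕ) (hn : 1 ≤ n) :
    (∀ (u : Fin n → A) (v w : ℕ+ → (Fin n → A)),
      matSub C n hn (matSub C n hn u v) w =
        matSub C n hn u (fun k => matSub C n hn (v k) w)) ∧
    (∀ u : Fin n → A, matSub C n hn u (fun k => matX C n k) = u) ∧
    (∀ (k : ℕ+) (v : ℕ+ → (Fin n → A)), matSub C n hn (matX C n k) v = v k) := by
  refine ⟨fun u v w => ?_, fun u => ?_, fun k v => ?_⟩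
  · funext i
    simp only [matSub, C.sub_assoc, matConc_matSub]
  · funext i
    simp only [matSub, matConc_matX, C.sub_x]
  · funext i
    exact (C.x_sub _ _).trans (matConc_apply_index hn v k i)
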